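/- arXiv:2601.18794 — 2 statements merged into one kernel-verified Lean document; each statement's English description precedes it below -/
import Mathlib

section
/- For integers n ≥ 3 and 1 ≤ k ≤ n−2, the function f̂(t) = sqrt((k − (n−1)t²)/(n−k−1)) satisfies the capillary cone ODE (1+f²)((1−t²)f'' + (n−1)(f − t f')) + (n−2)(1−t²)(f')²(f − t f') + (k−1)t⁻¹ f'(1 + f² + (1−t²)(f')²) = 0 for all t in the open interval (0, sqrt(k/(n−1))). -/
/-!
On its domain `f̂² = c − d t²` with `c = k/(n−k−1)` and `d = (n−1)/(n−k−1)`, so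
`f̂' = −d t / f̂` and `f̂'' = −c d / f̂³`. Substituting these, the left-hand side of the ODE becomes,
after clearing denominators, a polynomial multiple of the relation `(n−k−1) f̂² = k − (n−1) t²`.
-/

open Filter Topology

/-- The Lawson profile `f̂(t) = √((k − (n−1)t²)/(n−k−1))`. -/
noncomputable def lawsonProfile (n k : ℕ) : ℝ → ℝ :=
  fun t => Real.sqrt (((k : ℝ) - ((n : ℝ) - 1) * t ^ 2) / ((n : ℝ) - (k : ℝ) - 1))

noncomputable def capillaryConeOperator (n k t f f' f'' : ℝ) : ℝ :=
  (1 + f ^ 2) * ((1 - t ^ 2) * f'' + (n - 1) * (f - t * f'))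
    + (n - 2) * (1 - t ^ 2) * f' ^ 2 * (f - t * f')
    + (k - 1) * t⁻¹ * f' * (1 + f ^ 2 + (1 - t ^ 2) * f' ^ 2)

section SqrtOfQuadratic

variable {c d t : ℝ}

theorem hasDerivAt_sqrt_sub_mul_sq (h : 0 < c - d * t ^ 2) :
    HasDerivAt (fun x => √(c - d * x ^ 2)) (-(d * t) / √(c - d * t ^ 2)) t := by
  have hinner : HasDerivAt (fun x => c - d * x ^ 2) (-(d * (2 * t))) t := by
    simpa using ((hasDerivAt_pow 2 t).const_mul d).const_sub c
  refine (hinner.sqrt h.ne').congr_deriv ?_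
  field_simp

theorem deriv_sqrt_sub_mul_sq_eventuallyEq (h : 0 < c - d * t ^ 2) :
    deriv (fun x => √(c - d * x ^ 2)) =ᶠ[𝓝 t] fun x => -(d * x) / √(c - d * x ^ 2) := by
  have hopen : IsOpen {x : ℝ | 0 < c - d * x ^ 2} := isOpen_lt continuous_const (by fun_prop)
  filter_upwards [hopen.mem_nhds h] with x hx
  exact (hasDerivAt_sqrt_sub_mul_sq hx).deriv

theorem hasDerivAt_neg_mul_div_sqrt_sub_mul_sq (h : 0 < c - d * t ^ 2) :
    HasDerivAt (fun x => -(d * x) / √(c - d * x ^ 2)) (-(c * d) / √(c - d * t ^ 2) ^ 3) t := by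
  have hsq : √(c - d * t ^ 2) ^ 2 = c - d * t ^ 2 := Real.sq_sqrt h.le
  have hnum : HasDerivAt (fun x => -(d * x)) (-d) t := by
    simpa using ((hasDerivAt_id' t).const_mul d).fun_neg
  refine (hnum.fun_div (hasDerivAt_sqrt_sub_mul_sq h) (Real.sqrt_pos.mpr h).ne').congr_deriv ?_
  field_simp
  linear_combination (-d) * hsq

theorem deriv_deriv_sqrt_sub_mul_sq (h : 0 < c - d * t ^ 2) :
    deriv (deriv fun x => √(c - d * x ^ 2)) t = -(c * d) / √(c - d * t ^ 2) ^ 3 := by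
  rw [(deriv_sqrt_sub_mul_sq_eventuallyEq h).deriv_eq]
  exact (hasDerivAt_neg_mul_div_sqrt_sub_mul_sq h).deriv

end SqrtOfQuadratic

theorem capillaryConeOperator_eq_zero_of_sq {n k t s : ℝ} (hm : n - k - 1 ≠ 0) (ht : t ≠ 0)
    (hs : s ≠ 0) (hs2 : s ^ 2 = k / (n - k - 1) - (n - 1) / (n - k - 1) * t ^ 2) :
    capillaryConeOperator n k t s (-((n - 1) / (n - k - 1) * t) / s)
      (-(k / (n - k - 1) * ((n - 1) / (n - k - 1))) / s ^ 3) = 0 := by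
  unfold capillaryConeOperator
  field_simp at hs2 ⊢
  linear_combination (n - 1) * ((1 + s ^ 2) * (n - k - 1) ^ 2 * s ^ 2
    + t ^ 2 * (1 - t ^ 2) * (n - 1) * (n - 2) + (n - k - 1) * (1 + s ^ 2 - t ^ 2)) * hs2

theorem lawsonProfile_eq (n k : ℕ) :
    lawsonProfile n k = fun x =>
      √((k : ℝ) / (n - k - 1) - ((n : ℝ) - 1) / (n - k - 1) * x ^ 2) := by
  funext x
  rw [lawsonProfile, sub_div, mul_div_right_comm]

theorem stmt_0_general (n k : ℕ) (hk2 : k + 2 ≤ n) :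
    ∀ t ∈ Set.Ioo (0 : ℝ) (Real.sqrt ((k : ℝ) / ((n : ℝ) - 1))),
      (1 + lawsonProfile n k t ^ 2) *
          ((1 - t ^ 2) * deriv (deriv (lawsonProfile n k)) t
            + ((n : ℝ) - 1) * (lawsonProfile n k t - t * deriv (lawsonProfile n k) t))
        + ((n : ℝ) - 2) * (1 - t ^ 2) * (deriv (lawsonProfile n k) t) ^ 2 *
            (lawsonProfile n k t - t * deriv (lawsonProfile n k) t)
        + ((k : ℝ) - 1) * t⁻¹ * deriv (lawsonProfile n k) t *
            (1 + lawsonProfile n k t ^ 2 + (1 - t ^ 2) * (deriv (lawsonProfile n k) t) ^ 2)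
        = 0 := by
  rintro t ⟨ht0, htmax⟩
  have hm : (0 : ℝ) < n - k - 1 := by
    have : (k : ℝ) + 2 ≤ n := by exact_mod_cast hk2
    linarith
  have hbelow : ((n : ℝ) - 1) * t ^ 2 < k := by
    have := (Real.lt_sqrt ht0.le).mp htmax
    rwa [lt_div_iff₀ (by linarith), mul_comm] at this
  have hpos : 0 < (k : ℝ) / (n - k - 1) - ((n : ℝ) - 1) / (n - k - 1) * t ^ 2 := by
    rw [← mul_div_right_comm, ← sub_div]
    exact div_pos (by linarith) hm
  change capillaryConeOperator n k t (lawsonProfile n k t) (deriv (lawsonProfile n k) t)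
    (deriv (deriv (lawsonProfile n k)) t) = 0
  rw [lawsonProfile_eq, deriv_deriv_sqrt_sub_mul_sq hpos, (hasDerivAt_sqrt_sub_mul_sq hpos).deriv]
  exact capillaryConeOperator_eq_zero_of_sq hm.ne' ht0.ne' (Real.sqrt_pos.mpr hpos).ne'
    (Real.sq_sqrt hpos.le)

/-- The Lawson profile satisfies the capillary cone ODE on `(0, √(k/(n−1)))`. -/
theorem stmt_0 (n k : ℕ) (hn : 3 ≤ n) (hk1 : 1 ≤ k) (hk2 : k + 2 ≤ n) :
    ∀ t ∈ Set.Ioo (0 : ℝ) (Real.sqrt ((k : ℝ) / ((n : ℝ) - 1))),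
      (1 + lawsonProfile n k t ^ 2) *
          ((1 - t ^ 2) * deriv (deriv (lawsonProfile n k)) t
            + ((n : ℝ) - 1) * (lawsonProfile n k t - t * deriv (lawsonProfile n k) t))
        + ((n : ℝ) - 2) * (1 - t ^ 2) * (deriv (lawsonProfile n k) t) ^ 2 *
            (lawsonProfile n k t - t * deriv (lawsonProfile n k) t)
        + ((k : ℝ) - 1) * t⁻¹ * deriv (lawsonProfile n k) t *
            (1 + lawsonProfile n k t ^ 2 + (1 - t ^ 2) * (deriv (lawsonProfile n k) t) ^ 2)
        = 0 :=
  stmt_0_general n k hk2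
end

section
/- Let n ≥ 3, 1 ≤ k ≤ n−2, set α = (k−1)/(n−2), A(t) = t − α/t, and let L f := (1−t²)f'' + (n−1)(f − t f') + (k−1)t⁻¹ f'. Then for any C² function f on an interval not containing 0, the function h := f − A f' satisfies (1−t²)h' = A((n−1)h − L f) − α(1−α)t⁻² f'. -/
/-!
Differentiating gives `h' = -α t⁻² f' - A f''`. The rest is algebra: writing `k - 1 = α (n - 2)`,
the terms carrying `n - 1` cancel, and `A · α/t - α(1-α)/t² = -(1-t²) α/t²`.
-/

theorem hasDerivAt_id_sub_const_div (α : ℝ) {t : ℝ} (ht : t ≠ 0) :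
    HasDerivAt (fun s : ℝ => s - α / s) (1 + α / t ^ 2) t := by
  have hinv : HasDerivAt (fun s : ℝ => α / s) (-(α / t ^ 2)) t := by
    simpa [div_eq_mul_inv, mul_comm, neg_div] using (hasDerivAt_inv ht).const_mul α
  simpa [sub_neg_eq_add] using (hasDerivAt_id' t).fun_sub hinv

theorem hasDerivAt_sub_id_sub_const_div_mul {f f' : ℝ → ℝ} {f₂ t : ℝ} (α : ℝ) (ht : t ≠ 0)
    (hf : HasDerivAt f (f' t) t) (hf' : HasDerivAt f' f₂ t) :
    HasDerivAt (fun s => f s - (s - α / s) * f' s) (-(α / t ^ 2 * f' t) - (t - α / t) * f₂) t := by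
  refine (hf.fun_sub ((hasDerivAt_id_sub_const_div α ht).fun_mul hf')).congr_deriv ?_
  ring

theorem one_sub_sq_mul_deriv_transform_eq {α N c t f₀ f₁ f₂ : ℝ} (ht : t ≠ 0) (hc : c = α * (N - 1)) :
    (1 - t ^ 2) * (-(α / t ^ 2 * f₁) - (t - α / t) * f₂)
      = (t - α / t) * (N * (f₀ - (t - α / t) * f₁)
          - ((1 - t ^ 2) * f₂ + N * (f₀ - t * f₁) + c * t⁻¹ * f₁))
        - α * (1 - α) * f₁ / t ^ 2 := by
  subst hc
  field_simp
  ring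

theorem stmt_4_general (n k : ℕ) (hn : 3 ≤ n)
    (f f' f'' : ℝ → ℝ) (I : Set ℝ) (hI : I ⊆ Set.Ioo (0 : ℝ) 1)
    (hder1 : ∀ t ∈ I, HasDerivAt f (f' t) t)
    (hder2 : ∀ t ∈ I, HasDerivAt f' (f'' t) t) :
    ∀ t ∈ I,
      (1 - t ^ 2) *
          deriv (fun s => f s - (s - (((k : ℝ) - 1) / ((n : ℝ) - 2)) / s) * f' s) t
        = (t - (((k : ℝ) - 1) / ((n : ℝ) - 2)) / t) *
            (((n : ℝ) - 1) * (f t - (t - (((k : ℝ) - 1) / ((n : ℝ) - 2)) / t) * f' t)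
              - ((1 - t ^ 2) * f'' t + ((n : ℝ) - 1) * (f t - t * f' t)
                  + ((k : ℝ) - 1) * t⁻¹ * f' t))
          - (((k : ℝ) - 1) / ((n : ℝ) - 2)) * (1 - ((k : ℝ) - 1) / ((n : ℝ) - 2)) *
              f' t / t ^ 2 := by
  intro t ht
  have ht0 : t ≠ 0 := (hI ht).1.ne'
  have hn2 : (n : ℝ) - 2 ≠ 0 := by
    have : (3 : ℝ) ≤ n := by exact_mod_cast hn
    linarith
  rw [(hasDerivAt_sub_id_sub_const_div_mul _ ht0 (hder1 t ht) (hder2 t ht)).deriv]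
  refine one_sub_sq_mul_deriv_transform_eq ht0 ?_
  field_simp
  ring

/-- With `α = (k−1)/(n−2)`, `A(t) = t − α/t`, `L f = (1−t²)f'' + (n−1)(f − t f') + (k−1)t⁻¹ f'`,
and `h = f − A f'`, one has `(1−t²)h' = A((n−1)h − L f) − α(1−α)t⁻² f'` pointwise on any
`I ⊆ (0,1)`. -/
theorem stmt_4 (n k : ℕ) (hn : 3 ≤ n) (hk1 : 1 ≤ k) (hk2 : k + 2 ≤ n)
    (f f' f'' : ℝ → ℝ) (I : Set ℝ) (hI : I ⊆ Set.Ioo (0 : ℝ) 1)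
    (hder1 : ∀ t ∈ I, HasDerivAt f (f' t) t)
    (hder2 : ∀ t ∈ I, HasDerivAt f' (f'' t) t) :
    ∀ t ∈ I,
      (1 - t ^ 2) *
          deriv (fun s => f s - (s - (((k : ℝ) - 1) / ((n : ℝ) - 2)) / s) * f' s) t
        = (t - (((k : ℝ) - 1) / ((n : ℝ) - 2)) / t) *
            (((n : ℝ) - 1) * (f t - (t - (((k : ℝ) - 1) / ((n : ℝ) - 2)) / t) * f' t)
              - ((1 - t ^ 2) * f'' t + ((n : ℝ) - 1) * (f t - t * f' t)
                  + ((k : ℝ) - 1) * t⁻¹ * f' t))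
          - (((k : ℝ) - 1) / ((n : ℝ) - 2)) * (1 - ((k : ℝ) - 1) / ((n : ℝ) - 2)) *
              f' t / t ^ 2 :=
  stmt_4_general n k hn f f' f'' I hI hder1 hder2
end
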